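/- For odd i and 0 ≤ r ≤ u_{i+2}, the semiconvergent α_{i,r} = α_i + r α_{i+1} is totally positive and its norm equals N(α_{i,r}) = (D − (T_{i+1} + r N(α_{i+1}))²) / |N(α_{i+1})|. -/

import Mathlib

/-! The conjugates `p n - q n * √D` of the convergents alternate in sign, because
`(q n * √D - p n) * c (n + 1) = p (n - 1) - q (n - 1) * √D` and the complete quotients `c (n + 1)`
exceed `1`. For odd `i` the conjugate of `α_i + r α_{i+1}` therefore decreases in `r`, and at
`r = u (i + 2)` it is the conjugate of `α_{i+2}`, which is positive. The norm formula is
Brahmagupta's identity `T² - N(α_i) N(α_{i+1}) = D (p_{i+1} q_i - p_i q_{i+1})² = D`, combined with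
`N(α_{i+1}) < 0`. -/

open Real

theorem Nat.not_isSquare_of_mod_four {D : ℕ} (hD : D % 4 = 2 ∨ D % 4 = 3) : ¬IsSquare D := by
  rintro ⟨k, rfl⟩
  rcases Nat.even_or_odd k with ⟨j, rfl⟩ | ⟨j, rfl⟩ <;> ring_nf at hD <;> omega

structure IsCompleteQuotients (ξ : ℝ) (u : ℤ → ℤ) (c : ℤ → ℝ) : Prop where
  zero : c 0 = ξ
  floor : ∀ i, 0 ≤ i → u i = ⌊c i⌋
  succ : ∀ i, 0 ≤ i → c (i + 1) = 1 / (c i - u i)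

namespace IsCompleteQuotients

variable {ξ : ℝ} {u : ℤ → ℤ} {c : ℤ → ℝ}

theorem sub_eq_fract (h : IsCompleteQuotients ξ u c) {i : ℤ} (hi : 0 ≤ i) :
    c i - u i = Int.fract (c i) := by
  rw [h.floor i hi, Int.self_sub_floor]

theorem irrational (h : IsCompleteQuotients ξ u c) (hξ : Irrational ξ) :
    ∀ i, 0 ≤ i → Irrational (c i) := by
  intro i hi
  induction i, hi using Int.leInduction with
  | base => rwa [h.zero]
  | succ i hi ih =>
    rw [h.succ i hi, one_div]
    exact (ih.sub_intCast _).inv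

theorem fract_ne_zero (h : IsCompleteQuotients ξ u c) (hξ : Irrational ξ) {i : ℤ} (hi : 0 ≤ i) :
    Int.fract (c i) ≠ 0 :=
  (Int.fract_pos.2 ((h.irrational hξ i hi).ne_int _)).ne'

theorem one_lt_succ (h : IsCompleteQuotients ξ u c) (hξ : Irrational ξ) {i : ℤ} (hi : 0 ≤ i) :
    1 < c (i + 1) := by
  rw [h.succ i hi, h.sub_eq_fract hi]
  exact one_lt_one_div ((h.fract_ne_zero hξ hi).symm.lt_of_le (Int.fract_nonneg _))
    (Int.fract_lt_one _)

theorem one_lt (h : IsCompleteQuotients ξ u c) (hξ : Irrational ξ) (hξ1 : 1 < ξ) {i : ℤ}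
    (hi : 0 ≤ i) : 1 < c i := by
  obtain rfl | hi := hi.eq_or_lt
  · rwa [h.zero]
  · simpa using h.one_lt_succ hξ (show 0 ≤ i - 1 by omega)

theorem partialQuot_pos (h : IsCompleteQuotients ξ u c) (hξ : Irrational ξ) (hξ1 : 1 < ξ) {i : ℤ}
    (hi : 0 ≤ i) : 0 < u i := by
  rw [h.floor i hi, Int.floor_pos]
  exact (h.one_lt hξ hξ1 hi).le

end IsCompleteQuotients

structure IsConvergents (u p q : ℤ → ℤ) : Prop where
  num_neg_one : p (-1) = 1
  den_neg_one : q (-1) = 0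
  num_zero : p 0 = u 0
  den_zero : q 0 = 1
  num_succ : ∀ i, 0 ≤ i → p (i + 1) = u (i + 1) * p i + p (i - 1)
  den_succ : ∀ i, 0 ≤ i → q (i + 1) = u (i + 1) * q i + q (i - 1)

namespace IsConvergents

variable {u p q : ℤ → ℤ}

theorem isUnit_det (h : IsConvergents u p q) :
    ∀ n, 0 ≤ n → IsUnit (p n * q (n - 1) - p (n - 1) * q n) := by
  intro n hn
  induction n, hn using Int.leInduction with
  | base => simp [h.num_neg_one, h.den_neg_one, h.den_zero]
  | succ n hn ih =>
    have hflip : p (n + 1) * q n - p n * q (n + 1) = -(p n * q (n - 1) - p (n - 1) * q n) := by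
      rw [h.num_succ n hn, h.den_succ n hn]; ring
    rw [add_sub_cancel_right, hflip]
    exact ih.neg

theorem num_pos (h : IsConvergents u p q) (hu : ∀ i, 0 ≤ i → 0 < u i) :
    ∀ n, -1 ≤ n → 0 < p n := by
  have hpair : ∀ n, 0 ≤ n → 0 < p (n - 1) ∧ 0 < p n := by
    intro n hn
    induction n, hn using Int.leInduction with
    | base => exact ⟨by simp [h.num_neg_one], h.num_zero ▸ hu 0 le_rfl⟩
    | succ n hn ih =>
      refine ⟨by rw [add_sub_cancel_right]; exact ih.2, ?_⟩
      rw [h.num_succ n hn]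
      nlinarith [hu (n + 1) (by omega)]
  intro n hn
  simpa using (hpair (n + 1) (by omega)).1

theorem den_nonneg (h : IsConvergents u p q) (hu : ∀ i, 0 ≤ i → 0 ≤ u i) :
    ∀ n, -1 ≤ n → 0 ≤ q n := by
  have hpair : ∀ n, 0 ≤ n → 0 ≤ q (n - 1) ∧ 0 ≤ q n := by
    intro n hn
    induction n, hn using Int.leInduction with
    | base => simp [h.den_neg_one, h.den_zero]
    | succ n hn ih =>
      refine ⟨by rw [add_sub_cancel_right]; exact ih.2, ?_⟩
      rw [h.den_succ n hn]
      nlinarith [hu (n + 1) (by omega)]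
  intro n hn
  simpa using (hpair (n + 1) (by omega)).1

variable {ξ : ℝ} {c : ℤ → ℝ}

theorem conj_mul_completeQuot (h : IsConvergents u p q) (hc : IsCompleteQuotients ξ u c)
    (hξ : Irrational ξ) :
    ∀ n, 0 ≤ n → (q n * ξ - p n) * c (n + 1) = p (n - 1) - q (n - 1) * ξ := by
  intro n hn
  induction n, hn using Int.leInduction with
  | base =>
    have hne := hc.fract_ne_zero hξ le_rfl
    rw [← hc.sub_eq_fract le_rfl, hc.zero] at hne
    have hc1 : c 1 = 1 / (c 0 - u 0) := hc.succ 0 le_rfl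
    simp only [zero_add, zero_sub]
    rw [hc1, hc.zero, h.num_zero, h.den_zero, h.num_neg_one, h.den_neg_one]
    field_simp
    ring
  | succ n hn ih =>
    have hne := hc.fract_ne_zero hξ (show 0 ≤ n + 1 by omega)
    rw [← hc.sub_eq_fract (by omega)] at hne
    rw [hc.succ (n + 1) (by omega), add_sub_cancel_right, h.num_succ n hn, h.den_succ n hn]
    push_cast
    field_simp
    linear_combination ih

theorem conj_sign (h : IsConvergents u p q) (hc : IsCompleteQuotients ξ u c) (hξ : Irrational ξ) :
    ∀ n, -1 ≤ n → (Odd n → 0 < p n - q n * ξ) ∧ (Even n → p n - q n * ξ < 0) := by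
  intro n hn
  induction n, hn using Int.leInduction with
  | base => exact ⟨fun _ ↦ by simp [h.num_neg_one, h.den_neg_one], fun hev ↦ by simp at hev⟩
  | succ n hn ih =>
    have hrel := h.conj_mul_completeQuot hc hξ (n + 1) (by omega)
    have hcpos : 0 < c (n + 1 + 1) := by linarith [hc.one_lt_succ hξ (show 0 ≤ n + 1 by omega)]
    rw [add_sub_cancel_right] at hrel
    refine ⟨fun hodd ↦ ?_, fun heven ↦ ?_⟩
    · have := ih.2 (by simpa [odd_add_one] using hodd)
      nlinarith
    · have := ih.1 (by simpa [Int.even_add_one] using heven)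
      nlinarith

theorem semiconvergent_pos (h : IsConvergents u p q) (hu : ∀ i, 0 ≤ i → 0 < u i) (hξ : 0 ≤ ξ)
    {i r : ℤ} (hi : -1 ≤ i) (hr : 0 ≤ r) :
    0 < ((p i : ℝ) + r * p (i + 1)) + ((q i : ℝ) + r * q (i + 1)) * ξ := by
  have hpi : (0 : ℝ) < p i := by exact_mod_cast h.num_pos hu i hi
  have hpi₁ : (0 : ℝ) < p (i + 1) := by exact_mod_cast h.num_pos hu (i + 1) (by omega)
  have hqi : (0 : ℝ) ≤ q i := by exact_mod_cast h.den_nonneg (fun j hj ↦ (hu j hj).le) i hi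
  have hqi₁ : (0 : ℝ) ≤ q (i + 1) := by
    exact_mod_cast h.den_nonneg (fun j hj ↦ (hu j hj).le) (i + 1) (by omega)
  have hr : (0 : ℝ) ≤ r := by exact_mod_cast hr
  positivity

theorem semiconvergent_conj_pos (h : IsConvergents u p q) (hc : IsCompleteQuotients ξ u c)
    (hξ : Irrational ξ) {i r : ℤ} (hodd : Odd i) (hi : -1 ≤ i) (hru : r ≤ u (i + 2)) :
    0 < ((p i : ℝ) + r * p (i + 1)) - ((q i : ℝ) + r * q (i + 1)) * ξ := by
  have hconj₁ := (h.conj_sign hc hξ (i + 1) (by omega)).2 hodd.add_one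
  have hconj₂ := (h.conj_sign hc hξ (i + 2) (by omega)).1 (hodd.add_even even_two)
  have hrec : (p (i + 2) : ℝ) - q (i + 2) * ξ
      = u (i + 2) * (p (i + 1) - q (i + 1) * ξ) + (p i - q i * ξ) := by
    have hnum := h.num_succ (i + 1) (by omega)
    have hden := h.den_succ (i + 1) (by omega)
    rw [add_sub_cancel_right, add_assoc, one_add_one_eq_two] at hnum hden
    rw [hnum, hden]
    push_cast
    ring
  have hur : (0 : ℝ) ≤ u (i + 2) - r := by exact_mod_cast sub_nonneg.2 hru
  nlinarith [mul_nonneg hur (neg_nonneg.2 hconj₁.le)]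

theorem norm_neg_of_even (h : IsConvergents u p q) (hc : IsCompleteQuotients ξ u c)
    (hξ : Irrational ξ) (hξ1 : 1 < ξ) {n : ℤ} (heven : Even n) (hn : 0 ≤ n) :
    (p n : ℝ) ^ 2 - ξ ^ 2 * q n ^ 2 < 0 := by
  have hu : ∀ i, 0 ≤ i → 0 < u i := fun i hi ↦ hc.partialQuot_pos hξ hξ1 hi
  have hpn : (0 : ℝ) < p n := by exact_mod_cast h.num_pos hu n (by omega)
  have hqn : (0 : ℝ) ≤ q n := by exact_mod_cast h.den_nonneg (fun j hj ↦ (hu j hj).le) n (by omega)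
  have hconj := (h.conj_sign hc hξ n (by omega)).2 heven
  have hfactor : (p n : ℝ) ^ 2 - ξ ^ 2 * q n ^ 2 = (p n + q n * ξ) * (p n - q n * ξ) := by ring
  rw [hfactor]
  exact mul_neg_of_pos_of_neg (by nlinarith) hconj

end IsConvergents

theorem norm_add_mul_eq_div_abs {K : Type*} [Field K] [LinearOrder K] [IsStrictOrderedRing K]
    {d a b P Q : K} (r : K) (hdet : (P * b - a * Q) ^ 2 = 1) (hN : P ^ 2 - d * Q ^ 2 < 0) :
    (a + r * P) ^ 2 - d * (b + r * Q) ^ 2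
      = (d - ((P * a - d * (Q * b)) + r * (P ^ 2 - d * Q ^ 2)) ^ 2) / |P ^ 2 - d * Q ^ 2| := by
  rw [abs_of_neg hN, eq_div_iff (neg_ne_zero.2 hN.ne)]
  linear_combination d * hdet

theorem stmt10_general (D : ℕ) (hD4 : D % 4 = 2 ∨ D % 4 = 3)
    (u : ℤ → ℤ) (c : ℤ → ℝ)
    (hc0 : c 0 = Real.sqrt D)
    (hu : ∀ i : ℤ, 0 ≤ i → u i = ⌊c i⌋)
    (hcrec : ∀ i : ℤ, 0 ≤ i → c (i + 1) = 1 / (c i - u i))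
    (p q : ℤ → ℤ)
    (hpm : p (-1) = 1) (hqm : q (-1) = 0)
    (hp0 : p 0 = u 0) (hq0 : q 0 = 1)
    (hprec : ∀ i : ℤ, 0 ≤ i → p (i + 1) = u (i + 1) * p i + p (i - 1))
    (hqrec : ∀ i : ℤ, 0 ≤ i → q (i + 1) = u (i + 1) * q i + q (i - 1)) :
    ∀ i : ℤ, Odd i → -1 ≤ i → ∀ r : ℤ, 0 ≤ r → r ≤ u (i + 2) →
      (0 < ((p i : ℝ) + r * (p (i + 1) : ℝ)) + ((q i : ℝ) + r * (q (i + 1) : ℝ)) * Real.sqrt D ∧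
       0 < ((p i : ℝ) + r * (p (i + 1) : ℝ)) - ((q i : ℝ) + r * (q (i + 1) : ℝ)) * Real.sqrt D) ∧
      (((p i : ℝ) + (r : ℝ) * (p (i + 1) : ℝ)) ^ 2 - (D : ℝ) * ((q i : ℝ) + (r : ℝ) * (q (i + 1) : ℝ)) ^ 2)
        = ((D : ℝ) - (((p (i + 1) * p i - (D : ℤ) * (q (i + 1) * q i) : ℤ) : ℝ) + (r : ℝ) * ((p (i + 1) : ℝ) ^ 2 - (D : ℝ) * (q (i + 1) : ℝ) ^ 2)) ^ 2) / |((p (i + 1) : ℝ) ^ 2 - (D : ℝ) * (q (i + 1) : ℝ) ^ 2)| := by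
  intro i hi hi1 r hr0 hru
  have hξ : Irrational √D := irrational_sqrt_natCast_iff.2 (Nat.not_isSquare_of_mod_four hD4)
  have hξ1 : 1 < √D := Real.lt_sqrt_of_sq_lt (by norm_cast; omega)
  have hc : IsCompleteQuotients √D u c := ⟨hc0, hu, hcrec⟩
  have hpq : IsConvergents u p q := ⟨hpm, hqm, hp0, hq0, hprec, hqrec⟩
  refine ⟨⟨hpq.semiconvergent_pos (fun j hj ↦ hc.partialQuot_pos hξ hξ1 hj) (by positivity) hi1 hr0,
    hpq.semiconvergent_conj_pos hc hξ hi hi1 hru⟩, ?_⟩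
  have hN := hpq.norm_neg_of_even hc hξ hξ1 hi.add_one (by omega)
  rw [Real.sq_sqrt (Nat.cast_nonneg D)] at hN
  have hdet := Int.isUnit_sq (hpq.isUnit_det (i + 1) (by omega))
  rw [add_sub_cancel_right] at hdet
  push_cast
  exact norm_add_mul_eq_div_abs (r : ℝ) (by exact_mod_cast hdet) hN

theorem stmt10 (D : ℕ) (hDsf : Squarefree D) (hD4 : D % 4 = 2 ∨ D % 4 = 3)
    (u : ℤ → ℤ) (c : ℤ → ℝ)
    (hc0 : c 0 = Real.sqrt D)
    (hu : ∀ i : ℤ, 0 ≤ i → u i = ⌊c i⌋)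
    (hcrec : ∀ i : ℤ, 0 ≤ i → c (i + 1) = 1 / (c i - u i))
    (p q : ℤ → ℤ)
    (hpm : p (-1) = 1) (hqm : q (-1) = 0)
    (hp0 : p 0 = u 0) (hq0 : q 0 = 1)
    (hprec : ∀ i : ℤ, 0 ≤ i → p (i + 1) = u (i + 1) * p i + p (i - 1))
    (hqrec : ∀ i : ℤ, 0 ≤ i → q (i + 1) = u (i + 1) * q i + q (i - 1)) :
    ∀ i : ℤ, Odd i → -1 ≤ i → ∀ r : ℤ, 0 ≤ r → r ≤ u (i + 2) →
      (0 < ((p i : ℝ) + r * (p (i + 1) : ℝ)) + ((q i : ℝ) + r * (q (i + 1) : ℝ)) * Real.sqrt D ∧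
       0 < ((p i : ℝ) + r * (p (i + 1) : ℝ)) - ((q i : ℝ) + r * (q (i + 1) : ℝ)) * Real.sqrt D) ∧
      (((p i : ℝ) + (r : ℝ) * (p (i + 1) : ℝ)) ^ 2 - (D : ℝ) * ((q i : ℝ) + (r : ℝ) * (q (i + 1) : ℝ)) ^ 2)
        = ((D : ℝ) - (((p (i + 1) * p i - (D : ℤ) * (q (i + 1) * q i) : ℤ) : ℝ) + (r : ℝ) * ((p (i + 1) : ℝ) ^ 2 - (D : ℝ) * (q (i + 1) : ℝ) ^ 2)) ^ 2) / |((p (i + 1) : ℝ) ^ 2 - (D : ℝ) * (q (i + 1) : ℝ) ^ 2)| :=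
  stmt10_general D hD4 u c hc0 hu hcrec p q hpm hqm hp0 hq0 hprec hqrec
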